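/- Let E be a weakly idempotent complete exact category with enough projectives P and let T be a support τ-tilting subcategory of E. Then Fac T is closed under extensions in E (hence is a full exact subcategory), and the exact category Fac T has enough projectives given by T: every object of T is a projective object of the exact category Fac T, and every X ∈ Fac T admits a conflation Y ↣ Z ↠ X with Y ∈ Fac T and Z ∈ T. -/

import Mathlib

open CategoryTheory CategoryTheory.Limits ZeroObject

namespace TauTilting

universe w v u

/-- A class of "conflations" (kernel–cokernel pairs) on an additive category,
the datum underlying an exact structure in the sense of Quillen. -/
structure ConflationStruct (C : Type u) [Category.{v} C] [Preadditive C] where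
  /-- `IsConflation f g` means that `X ↣ Y ↠ Z` given by `f, g` is a conflation. -/
  IsConflation : ∀ ⦃X Y Z : C⦄, (X ⟶ Y) → (Y ⟶ Z) → Prop

namespace ConflationStruct

variable {C : Type u} [Category.{v} C] [Preadditive C] (S : ConflationStruct C)

/-- A morphism is an inflation if it occurs as the first map of a conflation. -/
def IsInflation {X Y : C} (f : X ⟶ Y) : Prop :=
  ∃ (Z : C) (g : Y ⟶ Z), S.IsConflation f g

/-- A morphism is a deflation if it occurs as the second map of a conflation. -/
def IsDeflation {Y Z : C} (g : Y ⟶ Z) : Prop :=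
  ∃ (X : C) (f : X ⟶ Y), S.IsConflation f g

/-- Quillen's axioms for an exact structure: conflations are kernel-cokernel pairs,
the class of conflations is closed under isomorphisms, identities are inflations and
deflations, inflations and deflations are closed under composition, pushouts of
inflations along arbitrary morphisms exist and are inflations, and dually. -/
structure IsExactStructure : Prop where
  ker_coker : ∀ {X Y Z : C} {f : X ⟶ Y} {g : Y ⟶ Z}, S.IsConflation f g →
    ∃ w : f ≫ g = 0, Nonempty (IsLimit (KernelFork.ofι f w)) ∧
      Nonempty (IsColimit (CokernelCofork.ofπ g w))
  iso_closed : ∀ {X X' Y Y' Z Z' : C} (eX : X' ≅ X) (eY : Y' ≅ Y) (eZ : Z' ≅ Z)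
    {f : X ⟶ Y} {g : Y ⟶ Z}, S.IsConflation f g →
    S.IsConflation (eX.hom ≫ f ≫ eY.inv) (eY.hom ≫ g ≫ eZ.inv)
  id_inflation : ∀ X : C, S.IsInflation (𝟙 X)
  id_deflation : ∀ X : C, S.IsDeflation (𝟙 X)
  inflation_comp : ∀ {X Y Z : C} {f : X ⟶ Y} {g : Y ⟶ Z},
    S.IsInflation f → S.IsInflation g → S.IsInflation (f ≫ g)
  deflation_comp : ∀ {X Y Z : C} {f : X ⟶ Y} {g : Y ⟶ Z},
    S.IsDeflation f → S.IsDeflation g → S.IsDeflation (f ≫ g)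
  pushout_inflation : ∀ {X Y Z : C} (f : X ⟶ Y) (h : X ⟶ Z), S.IsInflation f →
    ∃ (W : C) (h' : Y ⟶ W) (f' : Z ⟶ W), IsPushout f h h' f' ∧ S.IsInflation f'
  pullback_deflation : ∀ {X Y Z : C} (g : X ⟶ Z) (h : Y ⟶ Z), S.IsDeflation g →
    ∃ (W : C) (h' : W ⟶ X) (g' : W ⟶ Y), IsPullback h' g' g h ∧ S.IsDeflation g'

/-- An object `P` is projective relative to the exact structure: `Hom(P,-)` sends
conflations to short exact sequences, equivalently morphisms out of `P` lift along
deflations. -/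
def IsProjObj (P : C) : Prop :=
  ∀ ⦃Y Z : C⦄ (g : Y ⟶ Z), S.IsDeflation g → ∀ u : P ⟶ Z, ∃ v : P ⟶ Y, v ≫ g = u

/-- The class of projective objects. -/
def projClass : Set C := {P | S.IsProjObj P}

/-- The exact category has enough projectives. -/
def HasEnoughProjectives : Prop :=
  ∀ X : C, ∃ (P : C) (p : P ⟶ X), S.IsProjObj P ∧ S.IsDeflation p

/-- `Fac T` : objects admitting a deflation from an object of `T`. -/
def Fac (T : Set C) : Set C :=
  {X | ∃ (T' : C) (g : T' ⟶ X), T' ∈ T ∧ S.IsDeflation g}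

/-- `Sub T` : objects admitting an inflation into an object of `T`. -/
def Sub (T : Set C) : Set C :=
  {X | ∃ (T' : C) (f : X ⟶ T'), T' ∈ T ∧ S.IsInflation f}

/-- `Ext¹(X, Y) = 0`, expressed by the splitting of all conflations `Y ↣ E ↠ X`. -/
def ext1Zero (X Y : C) : Prop :=
  ∀ (E : C) (f : Y ⟶ E) (g : E ⟶ X), S.IsConflation f g → ∃ s : X ⟶ E, s ≫ g = 𝟙 X

/-- A morphism is admissible if it factors as a deflation followed by an inflation. -/
def IsAdmissible {X Y : C} (f : X ⟶ Y) : Prop :=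
  ∃ (K : C) (d : X ⟶ K) (i : K ⟶ Y), S.IsDeflation d ∧ S.IsInflation i ∧ d ≫ i = f

end ConflationStruct

section Approx

variable {C : Type u} [Category.{v} C]

/-- `f : P ⟶ X` is a left `T`-approximation. -/
def LeftApprox (T : Set C) {P X : C} (f : P ⟶ X) : Prop :=
  X ∈ T ∧ ∀ (T' : C), T' ∈ T → ∀ u : P ⟶ T', ∃ v : X ⟶ T', f ≫ v = u

/-- `f : X ⟶ M` is a right `T`-approximation. -/
def RightApprox (T : Set C) {X M : C} (f : X ⟶ M) : Prop :=
  X ∈ T ∧ ∀ (T' : C), T' ∈ T → ∀ u : T' ⟶ M, ∃ v : T' ⟶ X, v ≫ f = u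

/-- A class of objects closed under direct summands. -/
def SummandClosed (T : Set C) : Prop :=
  ∀ {X Z : C}, Z ∈ T → ∀ (i : X ⟶ Z) (r : Z ⟶ X), i ≫ r = 𝟙 X → X ∈ T

end Approx

section Additive

variable {C : Type u} [Category.{v} C] [Preadditive C] [HasZeroObject C] [HasBinaryBiproducts C]

/-- An additively closed subcategory: closed under isomorphisms, finite direct sums
and direct summands. -/
structure AdditivelyClosed (T : Set C) : Prop where
  mem_of_iso : ∀ {X Y : C}, (X ≅ Y) → X ∈ T → Y ∈ T
  zero_mem : (0 : C) ∈ T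
  biprod_mem : ∀ {X Y : C}, X ∈ T → Y ∈ T → (X ⊞ Y) ∈ T
  summand_mem : SummandClosed T

/-- An object is indecomposable if it is nonzero and any biproduct decomposition is
trivial. -/
def IsIndecomposable (X : C) : Prop :=
  ¬ IsZero X ∧ ∀ (A B : C), (X ≅ A ⊞ B) → IsZero A ∨ IsZero B

/-- The cardinality of the set of isomorphism classes of indecomposable objects in `T`. -/
noncomputable def numIndec (T : Set C) : Cardinal :=
  Cardinal.mk
    (Quot fun (X Y : {X : C // X ∈ T ∧ IsIndecomposable X}) => Nonempty ((X : C) ≅ (Y : C)))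

end Additive

section AddOf

variable {C : Type u} [Category.{v} C] [Preadditive C] [HasFiniteBiproducts C]

/-- The additive closure of a class of objects : direct summands of finite direct
sums of its objects. -/
def addOf (X : Set C) : Set C :=
  {Y | ∃ (n : ℕ) (f : Fin n → C), (∀ j, f j ∈ X) ∧
    ∃ (i : Y ⟶ ⨁ f) (r : (⨁ f) ⟶ Y), i ≫ r = 𝟙 Y}

/-- A Krull-Schmidt category: every object is a finite direct sum of objects with
local endomorphism ring. -/
def IsKrullSchmidt (C : Type u) [Category.{v} C] [Preadditive C] [HasFiniteBiproducts C] : Prop :=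
  ∀ X : C, ∃ (n : ℕ) (f : Fin n → C), (∀ j, IsLocalRing (End (f j))) ∧ Nonempty (X ≅ ⨁ f)

end AddOf

namespace ConflationStruct

variable {C : Type u} [Category.{v} C] [Preadditive C] (S : ConflationStruct C)

section TauTilt

/-- The existence of an exact sequence `P → T⁰ ↠ T¹` with `T⁰, T¹ ∈ T` whose first
map is a left `T`-approximation; the exact sequence is encoded by the factorization
of the first map as a deflation onto its image followed by an inflation which is a
kernel of the deflation `T⁰ ↠ T¹`. -/
def ApproxSeq (T : Set C) (P : C) : Prop :=
  ∃ (K T0 T1 : C) (d : P ⟶ K) (i : K ⟶ T0) (g : T0 ⟶ T1),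
    T1 ∈ T ∧ S.IsDeflation d ∧ S.IsConflation i g ∧ LeftApprox T (d ≫ i)

variable [HasZeroObject C] [HasBinaryBiproducts C]

/-- A τ-rigid subcategory: additively closed with `Ext¹(T, Fac T) = 0`. -/
def IsTauRigid (T : Set C) : Prop :=
  AdditivelyClosed T ∧ ∀ T' ∈ T, ∀ X ∈ S.Fac T, S.ext1Zero T' X

/-- A support τ-tilting subcategory. -/
def IsSupportTauTilting (T : Set C) : Prop :=
  S.IsTauRigid T ∧ ∀ P ∈ S.projClass, S.ApproxSeq T P

/-- Condition (A): every projective admits an admissible left `T`-approximation. -/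
def CondA (T : Set C) : Prop :=
  ∀ P ∈ S.projClass, ∃ (T' : C) (f : P ⟶ T'), LeftApprox T f ∧ S.IsAdmissible f

end TauTilt

section Relative

/-- `g` is a deflation of the full exact subcategory supported on `D` (i.e. it is part
of a conflation all of whose terms belong to `D`; the source and target are recorded
separately where needed). -/
def DeflationIn (D : Set C) {Y Z : C} (g : Y ⟶ Z) : Prop :=
  ∃ (X : C) (f : X ⟶ Y), X ∈ D ∧ S.IsConflation f g

/-- `P` is a projective object of the full exact subcategory supported on `D`. -/
def IsProjRel (D : Set C) (P : C) : Prop :=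
  P ∈ D ∧ ∀ ⦃Y Z : C⦄ (g : Y ⟶ Z), Y ∈ D → Z ∈ D → S.DeflationIn D g →
    ∀ u : P ⟶ Z, ∃ v : P ⟶ Y, v ≫ g = u

/-- `Ext¹(X,Y) = 0` computed in the full exact subcategory supported on `D`. -/
def ext1ZeroRel (D : Set C) (X Y : C) : Prop :=
  ∀ (E : C) (f : Y ⟶ E) (g : E ⟶ X), E ∈ D → S.IsConflation f g →
    ∃ s : X ⟶ E, s ≫ g = 𝟙 X

/-- `extSuccZeroRel S D n X Y` says `Ext^{n+1}(X, Y) = 0` in the full exact subcategory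
supported on `D`, via dimension shifting along syzygies. -/
def extSuccZeroRel (D : Set C) : ℕ → C → C → Prop
  | 0 => fun X Y => S.ext1ZeroRel D X Y
  | (n+1) => fun X Y => ∀ (K P : C) (i : K ⟶ P) (p : P ⟶ X),
      K ∈ D → S.IsProjRel D P → S.IsConflation i p → extSuccZeroRel D n K Y

/-- `Ext^{n+1}(X,Y) = 0` in the ambient exact category. -/
def extSuccZero (n : ℕ) (X Y : C) : Prop := S.extSuccZeroRel Set.univ n X Y

end Relative

section Tilting

variable [HasZeroObject C] [HasBinaryBiproducts C]

/-- A (1-)tilting subcategory of the ambient exact category (with enough projectives):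
additively closed, self-orthogonal for all `Ext^i`, `i ≥ 1`, of projective dimension at
most one, and every projective admits a conflation `P ↣ T⁰ ↠ T¹` with `T⁰, T¹ ∈ T`. -/
def IsTilting (T : Set C) : Prop :=
  AdditivelyClosed T ∧
  (∀ T1 ∈ T, ∀ T2 ∈ T, ∀ n : ℕ, S.extSuccZero n T1 T2) ∧
  (∀ T' ∈ T, ∀ Y : C, S.extSuccZero 1 T' Y) ∧
  (∀ P ∈ S.projClass, ∃ (T0 T1 : C) (f : P ⟶ T0) (g : T0 ⟶ T1),
    T0 ∈ T ∧ T1 ∈ T ∧ S.IsConflation f g)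

/-- A tilting subcategory of the full exact subcategory supported on `D` (whose
projectives are the relative projectives). -/
def IsTiltingRel (D T : Set C) : Prop :=
  AdditivelyClosed T ∧ T ⊆ D ∧
  (∀ T1 ∈ T, ∀ T2 ∈ T, ∀ n : ℕ, S.extSuccZeroRel D n T1 T2) ∧
  (∀ T' ∈ T, ∀ Y ∈ D, S.extSuccZeroRel D 1 T' Y) ∧
  (∀ P : C, S.IsProjRel D P → ∃ (T0 T1 : C) (f : P ⟶ T0) (g : T0 ⟶ T1),
    T0 ∈ T ∧ T1 ∈ T ∧ S.IsConflation f g)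

end Tilting

section Pairs

/-- `⊥₁ D`. -/
def perp1 (D : Set C) : Set C := {X | ∀ Y ∈ D, S.ext1Zero X Y}

/-- `T^⊥₀`. -/
def perp0 (T : Set C) : Set C := {Y | ∀ T' ∈ T, ∀ f : T' ⟶ Y, f = 0}

/-- A torsion class: closed under factor objects and extensions. -/
def IsTorsionClass (D : Set C) : Prop :=
  (∀ {X Y : C} (g : X ⟶ Y), X ∈ D → S.IsDeflation g → Y ∈ D) ∧
  (∀ {X Y Z : C} {f : X ⟶ Y} {g : Y ⟶ Z}, S.IsConflation f g → X ∈ D → Z ∈ D → Y ∈ D)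

/-- A torsion pair `(D, F)`. -/
def IsTorsionPair (D F : Set C) : Prop :=
  (∀ X ∈ D, ∀ Y ∈ F, ∀ f : X ⟶ Y, f = 0) ∧
  (∀ X : C, ∃ (D0 F0 : C) (i : D0 ⟶ X) (p : X ⟶ F0), D0 ∈ D ∧ F0 ∈ F ∧ S.IsConflation i p)

/-- A τ-cotorsion pair `(Cc, D)`. -/
def IsTauCotorsionPair (Cc D : Set C) : Prop :=
  Cc = S.perp1 D ∧
  ∀ P ∈ S.projClass, ∃ (K D0 C0 : C) (d : P ⟶ K) (i : K ⟶ D0) (g : D0 ⟶ C0),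
    D0 ∈ Cc ∧ D0 ∈ D ∧ C0 ∈ Cc ∧ S.IsDeflation d ∧ S.IsConflation i g ∧
    LeftApprox D (d ≫ i)

/-- A (complete) cotorsion pair `(Cc, D)`. -/
def IsCotorsionPair (Cc D : Set C) : Prop :=
  SummandClosed Cc ∧ SummandClosed D ∧
  (∀ X ∈ Cc, ∀ Y ∈ D, S.ext1Zero X Y) ∧
  (∀ X : C, ∃ (D0 C0 : C) (f : D0 ⟶ C0) (g : C0 ⟶ X),
    D0 ∈ D ∧ C0 ∈ Cc ∧ S.IsConflation f g) ∧
  (∀ X : C, ∃ (D1 C1 : C) (f : X ⟶ D1) (g : D1 ⟶ C1),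
    D1 ∈ D ∧ C1 ∈ Cc ∧ S.IsConflation f g)

/-- Admissibly contravariantly finite subcategory. -/
def IsACF (T : Set C) : Prop :=
  ∀ X : C, ∃ (T' : C) (f : T' ⟶ X), RightApprox T f ∧ S.IsAdmissible f

end Pairs

end ConflationStruct

/-- A weakly idempotent complete additive category: every section has a cokernel. -/
def WeaklyIdempotentComplete (C : Type u) [Category.{v} C] [Preadditive C] : Prop :=
  ∀ {X Y : C} (s : X ⟶ Y), (∃ r : Y ⟶ X, s ≫ r = 𝟙 X) → HasCokernel s


namespace ConflationStruct

variable {C : Type u} [Category.{v} C] [Preadditive C] (S : ConflationStruct C)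

section ET

/-- Membership in the ideal `I` of the category of projectives: morphisms `f`
between projectives with `Hom(f, T') = 0` for all `T' ∈ T`. -/
def memIdeal (T : Set C) {Q Q' : C} (f : Q ⟶ Q') : Prop :=
  S.IsProjObj Q ∧ S.IsProjObj Q' ∧ ∀ T' ∈ T, ∀ g : Q' ⟶ T', f ≫ g = 0

/-- `A_T`: the objects killed by the ideal `I`. -/
def AT (T : Set C) : Set C :=
  {X | ∀ ⦃Q Q' : C⦄ (f : Q ⟶ Q'), S.memIdeal T f → ∀ h : Q' ⟶ X, f ≫ h = 0}

/-- The conflation structure induced on a full subcategory: conflations of the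
ambient category all of whose terms lie in the subcategory. -/
def structOn (D : Set C) : ConflationStruct (ObjectProperty.FullSubcategory (fun X : C => X ∈ D)) :=
  ⟨fun _ _ _ f g => S.IsConflation f.hom g.hom⟩

variable [HasFiniteBiproducts C]

/-- `P_T`: additive closure of the images of admissible left `T`-approximations of
projectives. -/
def PTset (T : Set C) : Set C :=
  addOf {K | ∃ (Q T0 : C) (d : Q ⟶ K) (i : K ⟶ T0),
    S.IsProjObj Q ∧ S.IsDeflation d ∧ S.IsInflation i ∧ LeftApprox T (d ≫ i)}

end ET

section NTilting

/-- `T^⊥ = {Y | Ext^i(T', Y) = 0  for all i ≥ 1, T' ∈ T}`. -/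
def rperp (T : Set C) : Set C :=
  {Y | ∀ T' ∈ T, ∀ n : ℕ, S.extSuccZero n T' Y}

/-- `Cores S D n X` : `X` admits an exact sequence
`X ↣ Y₀ → ⋯ → Y_{n-1} ↠ Y_n` with all `Yᵢ ∈ D`. -/
def Cores (D : Set C) : ℕ → C → Prop
  | 0 => fun X => X ∈ D
  | (n+1) => fun X => ∃ (Y K : C) (i : X ⟶ Y) (p : Y ⟶ K),
      Y ∈ D ∧ S.IsConflation i p ∧ Cores D n K

/-- An `n`-tilting subcategory in the sense of Sauter: `T^⊥` has enough projectives
given by `T`, and every object has a `T^⊥`-coresolution of length `n`. -/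
def IsNTilting (T : Set C) (n : ℕ) : Prop :=
  T ⊆ S.rperp T ∧
  (∀ T' ∈ T, ∀ Y ∈ S.rperp T, S.ext1Zero T' Y) ∧
  (∀ Y ∈ S.rperp T, ∃ (K T' : C) (i : K ⟶ T') (p : T' ⟶ Y),
    T' ∈ T ∧ K ∈ S.rperp T ∧ S.IsConflation i p) ∧
  (∀ X : C, S.Cores (S.rperp T) n X)

/-- `P^{<∞}`: objects of finite projective dimension. -/
def Pfin : Set C := {X | ∃ n : ℕ, ∀ Y : C, S.extSuccZero n X Y}

end NTilting

section TauObj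

variable [HasZeroObject C] [HasBinaryBiproducts C]

/-- Variant of `ApproxSeq` where the left approximation is required to be nonzero. -/
def ApproxSeqNonzero (T : Set C) (P : C) : Prop :=
  ∃ (K T0 T1 : C) (d : P ⟶ K) (i : K ⟶ T0) (g : T0 ⟶ T1),
    T1 ∈ T ∧ S.IsDeflation d ∧ S.IsConflation i g ∧ LeftApprox T (d ≫ i) ∧ d ≫ i ≠ 0

/-- A τ-tilting subcategory: support τ-tilting such that every nonzero projective
admits a nonzero such approximation sequence. -/
def IsTauTiltingSubcat (T : Set C) : Prop :=
  S.IsSupportTauTilting T ∧ ∀ P ∈ S.projClass, ¬ IsZero P → S.ApproxSeqNonzero T P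

end TauObj

end ConflationStruct

section K0

variable {C : Type u} [Category.{v} C] [Preadditive C]

/-- Relations for the Grothendieck group of an exact subcategory: conflation
relations together with isomorphism relations. -/
def K0ExRels (S : ConflationStruct C) (D : Set C) :
    Set (FreeAbelianGroup {X : C // X ∈ D}) :=
  {x | (∃ (A B E : {X : C // X ∈ D}) (f : (A : C) ⟶ (B : C)) (g : (B : C) ⟶ (E : C)),
          S.IsConflation f g ∧
          x = FreeAbelianGroup.of B - FreeAbelianGroup.of A - FreeAbelianGroup.of E) ∨
       (∃ (A B : {X : C // X ∈ D}), Nonempty ((A : C) ≅ (B : C)) ∧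
          x = FreeAbelianGroup.of A - FreeAbelianGroup.of B)}

/-- The Grothendieck group of the full exact subcategory supported on `D`. -/
def K0Ex (S : ConflationStruct C) (D : Set C) :=
  FreeAbelianGroup {X : C // X ∈ D} ⧸ AddSubgroup.closure (K0ExRels S D)

noncomputable instance (S : ConflationStruct C) (D : Set C) : AddCommGroup (K0Ex S D) :=
  QuotientAddGroup.Quotient.addCommGroup _

variable [HasBinaryBiproducts C]

/-- Relations for the split Grothendieck group of an additive subcategory. -/
def K0SplitRels (T : Set C) : Set (FreeAbelianGroup {X : C // X ∈ T}) :=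
  {x | (∃ (A B E : {X : C // X ∈ T}), Nonempty ((E : C) ≅ (A : C) ⊞ (B : C)) ∧
          x = FreeAbelianGroup.of E - FreeAbelianGroup.of A - FreeAbelianGroup.of B) ∨
       (∃ (A B : {X : C // X ∈ T}), Nonempty ((A : C) ≅ (B : C)) ∧
          x = FreeAbelianGroup.of A - FreeAbelianGroup.of B)}

/-- The split Grothendieck group of the additive subcategory supported on `T`. -/
def K0Split (T : Set C) :=
  FreeAbelianGroup {X : C // X ∈ T} ⧸ AddSubgroup.closure (K0SplitRels T)

noncomputable instance (T : Set C) : AddCommGroup (K0Split T) :=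
  QuotientAddGroup.Quotient.addCommGroup _

end K0

end TauTilting

/-!
Extension closure of `Fac T` and relative projectivity of `T` both come from pulling a
conflation back along a morphism out of an object of `T`: the pulled-back conflation starts in
`Fac T` and ends in `T`, so it splits by τ-rigidity.

For `X ∈ Fac T`, choose `X₁ ↣ T_X ↠ X` with `T_X ∈ T`, cover `X₁` by a projective `P` and let
`P ↠ K ↣ T⁰ ↠ T¹` be the approximation sequence of `P`. Since `P → T⁰` is a left
`T`-approximation, `P ↠ X₁ ↣ T_X` factors through it, which produces `K → X₁`; it is a deflation
by weak idempotent completeness. Pushing `K ↣ T⁰ ↠ T¹` out along it gives `X₁ ↣ Q ↠ T¹` with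
`Q` a quotient of `T⁰`, mapping to `X₁ ↣ T_X ↠ X` by the identity on `X₁`. Such a morphism of
conflations yields the conflation `Q ↣ T_X ⊞ T¹ ↠ X`.
-/

namespace TauTilting

universe v u

open CategoryTheory CategoryTheory.Limits

lemma isPushout_of_exists_desc {C : Type u} [Category.{v} C] {X Y Z P : C} {f : X ⟶ Y}
    {g : X ⟶ Z} {inl : Y ⟶ P} {inr : Z ⟶ P} (w : f ≫ inl = g ≫ inr)
    (hdesc : ∀ {W : C} (a : Y ⟶ W) (b : Z ⟶ W), f ≫ a = g ≫ b →
      ∃ τ : P ⟶ W, inl ≫ τ = a ∧ inr ≫ τ = b)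
    (hext : ∀ {W : C} (τ τ' : P ⟶ W), inl ≫ τ = inl ≫ τ' → inr ≫ τ = inr ≫ τ' → τ = τ') :
    IsPushout f g inl inr := by
  choose desc hdesc_inl hdesc_inr using
    fun s : PushoutCocone f g => hdesc s.inl s.inr s.condition
  exact IsPushout.of_isColimit' ⟨w⟩ <| PushoutCocone.IsColimit.mk w desc hdesc_inl hdesc_inr
    fun s m hl hr => hext _ _ (by rw [hl, hdesc_inl]) (by rw [hr, hdesc_inr])

lemma WeaklyIdempotentComplete.exists_iso_biprod {C : Type u} [Category.{v} C] [Preadditive C]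
    [HasBinaryBiproducts C] (hWIC : WeaklyIdempotentComplete C) {A D : C} {u : A ⟶ D}
    {p : D ⟶ A} (hup : u ≫ p = 𝟙 A) :
    ∃ (U : C) (e : D ≅ A ⊞ U), u ≫ e.hom = biprod.inl ∧ e.hom ≫ biprod.fst = p := by
  have := hWIC u ⟨p, hup⟩
  let j : cokernel u ⟶ D := cokernel.desc u (𝟙 D - p ≫ u) (by simp [reassoc_of% hup])
  have hjp : j ≫ p = 0 := by
    rw [← cancel_epi (cokernel.π u)]; simp [j, hup]
  have hjπ : j ≫ cokernel.π u = 𝟙 _ := by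
    rw [← cancel_epi (cokernel.π u)]; simp [j]
  refine ⟨cokernel u, ⟨biprod.lift p (cokernel.π u), biprod.desc u j, by simp [j], ?_⟩,
    by ext <;> simp [hup], by simp⟩
  ext <;> simp [hup, hjp, hjπ]

namespace ConflationStruct.IsExactStructure

variable {C : Type u} [Category.{v} C] [Preadditive C] {S : ConflationStruct C}
  (hS : S.IsExactStructure)
include hS

section Basic

variable {X Y Z : C} {f : X ⟶ Y} {g : Y ⟶ Z}

lemma comp_eq_zero (h : S.IsConflation f g) : f ≫ g = 0 :=
  (hS.ker_coker h).1

lemma isLimit_kernelFork (h : S.IsConflation f g) :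
    Nonempty (IsLimit (KernelFork.ofι f (hS.comp_eq_zero h))) :=
  (hS.ker_coker h).2.1

lemma isColimit_cokernelCofork (h : S.IsConflation f g) :
    Nonempty (IsColimit (CokernelCofork.ofπ g (hS.comp_eq_zero h))) :=
  (hS.ker_coker h).2.2

lemma mono_of_isConflation (h : S.IsConflation f g) : Mono f :=
  let ⟨hl⟩ := hS.isLimit_kernelFork h; mono_of_isLimit_fork hl

lemma epi_of_isConflation (h : S.IsConflation f g) : Epi g :=
  let ⟨hc⟩ := hS.isColimit_cokernelCofork h; epi_of_isColimit_cofork hc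

lemma exists_lift (h : S.IsConflation f g) {A : C} (t : A ⟶ Y) (ht : t ≫ g = 0) :
    ∃ ρ : A ⟶ X, ρ ≫ f = t :=
  let ⟨hl⟩ := hS.isLimit_kernelFork h; ⟨_, (KernelFork.IsLimit.lift' hl t ht).2⟩

lemma exists_desc (h : S.IsConflation f g) {A : C} (t : Y ⟶ A) (ht : f ≫ t = 0) :
    ∃ δ : Z ⟶ A, g ≫ δ = t :=
  let ⟨hc⟩ := hS.isColimit_cokernelCofork h; ⟨_, (CokernelCofork.IsColimit.desc' hc t ht).2⟩

lemma isConflation_iso (h : S.IsConflation f g) {X' Y' Z' : C} (eX : X' ≅ X) (eY : Y ≅ Y')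
    (eZ : Z ≅ Z') {f' : X' ⟶ Y'} {g' : Y' ⟶ Z'} (hf : f' = eX.hom ≫ f ≫ eY.hom)
    (hg : g' = eY.inv ≫ g ≫ eZ.hom) : S.IsConflation f' g' := by
  simpa [hf, hg] using hS.iso_closed eX eY.symm eZ.symm h

lemma isConflation_of_exists_lift (h : S.IsConflation f g) {X' : C} {f' : X' ⟶ Y} [Mono f']
    (w : f' ≫ g = 0) (hlift : ∀ {A : C} (t : A ⟶ Y), t ≫ g = 0 → ∃ ρ : A ⟶ X', ρ ≫ f' = t) :
    S.IsConflation f' g := by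
  obtain ⟨hl₀⟩ := hS.isLimit_kernelFork h
  let hl := KernelFork.IsLimit.ofι' f' w fun t ht => ⟨_, (hlift t ht).choose_spec⟩
  refine hS.isConflation_iso h (IsLimit.conePointUniqueUpToIso hl hl₀) (Iso.refl _)
    (Iso.refl _) ?_ (by simp)
  simpa using (IsLimit.conePointUniqueUpToIso_hom_comp hl hl₀ WalkingParallelPair.zero).symm

lemma isConflation_of_exists_desc (h : S.IsConflation f g) {Z' : C} {g' : Y ⟶ Z'} [Epi g']
    (w : f ≫ g' = 0) (hdesc : ∀ {A : C} (t : Y ⟶ A), f ≫ t = 0 → ∃ σ : Z' ⟶ A, g' ≫ σ = t) :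
    S.IsConflation f g' := by
  obtain ⟨hc₀⟩ := hS.isColimit_cokernelCofork h
  let hc := CokernelCofork.IsColimit.ofπ' g' w fun t ht => ⟨_, (hdesc t ht).choose_spec⟩
  refine hS.isConflation_iso h (Iso.refl _) (Iso.refl _)
    (IsColimit.coconePointUniqueUpToIso hc₀ hc) (by simp) ?_
  simpa using
    (IsColimit.comp_coconePointUniqueUpToIso_hom hc₀ hc WalkingParallelPair.one).symm

lemma epi_of_isDeflation (h : S.IsDeflation g) : Epi g :=
  let ⟨_, _, h⟩ := h; hS.epi_of_isConflation h

lemma exists_comp_eq_of_isDeflation {W E B M : C} {β : W ⟶ E} (hβ : S.IsDeflation β)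
    {m : B ⟶ M} [Mono m] {t : E ⟶ M} {ρ' : W ⟶ B} (h : ρ' ≫ m = β ≫ t) :
    ∃ ρ : E ⟶ B, ρ ≫ m = t := by
  obtain ⟨N, ν, hν⟩ := hβ
  obtain ⟨ρ, hρ⟩ := hS.exists_desc hν ρ' <| by
    rw [← cancel_mono m, Category.assoc, h, reassoc_of% hS.comp_eq_zero hν, zero_comp, zero_comp]
  have := hS.epi_of_isConflation hν
  exact ⟨ρ, by rw [← cancel_epi β, reassoc_of% hρ, h]⟩

lemma isDeflation_zero [HasZeroObject C] (X : C) : S.IsDeflation (0 : X ⟶ 0) := by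
  obtain ⟨Z, g, h⟩ := hS.id_inflation X
  have hg : g = 0 := by simpa using hS.comp_eq_zero h
  have := hS.epi_of_isConflation h
  exact ⟨X, 𝟙 X, hS.isConflation_iso h (Iso.refl _) (Iso.refl _)
    (IsZero.of_epi_eq_zero g hg).isoZero (by simp) (by simp [hg])⟩

end Basic

lemma isDeflation_of_isIso {X Y : C} (φ : X ⟶ Y) [IsIso φ] : S.IsDeflation φ := by
  obtain ⟨X₀, f₀, h⟩ := hS.id_deflation X
  exact ⟨X₀, f₀, hS.isConflation_iso h (Iso.refl _) (Iso.refl _) (asIso φ) (by simp) (by simp)⟩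

lemma isInflation_of_isIso {X Y : C} (φ : X ⟶ Y) [IsIso φ] : S.IsInflation φ := by
  obtain ⟨Z₀, g₀, h⟩ := hS.id_inflation Y
  exact ⟨Z₀, g₀, hS.isConflation_iso h (asIso φ) (Iso.refl _) (Iso.refl _) (by simp) (by simp)⟩

lemma isDeflation_of_isPullback {P X Y Z : C} {fst : P ⟶ X} {snd : P ⟶ Y} {f : X ⟶ Z}
    {g : Y ⟶ Z} (h : IsPullback fst snd f g) (hf : S.IsDeflation f) : S.IsDeflation snd := by
  obtain ⟨W, fst', snd', h', hsnd'⟩ := hS.pullback_deflation f g hf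
  rw [← h.isoIsPullback_hom_snd _ _ h']
  exact hS.deflation_comp (hS.isDeflation_of_isIso _) hsnd'

lemma isInflation_of_isPushout {X Y Z P : C} {f : X ⟶ Y} {g : X ⟶ Z} {inl : Y ⟶ P}
    {inr : Z ⟶ P} (h : IsPushout f g inl inr) (hf : S.IsInflation f) : S.IsInflation inr := by
  obtain ⟨W, inl', inr', h', hinr'⟩ := hS.pushout_inflation f g hf
  rw [← h'.inr_isoIsPushout_hom _ _ h]
  exact hS.inflation_comp hinr' (hS.isInflation_of_isIso _)

lemma isConflation_of_isPullback {X Y Z W U : C} {f : X ⟶ Y} {g : Y ⟶ Z} {w : W ⟶ Y}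
    {g' : W ⟶ U} {u : U ⟶ Z} (hfg : S.IsConflation f g) (h : IsPullback w g' g u) :
    ∃ f' : X ⟶ W, f' ≫ w = f ∧ S.IsConflation f' g' := by
  obtain ⟨X₀, f₀, hconf⟩ := hS.isDeflation_of_isPullback h ⟨X, f, hfg⟩
  have hf0 : f ≫ g = 0 ≫ u := by rw [hS.comp_eq_zero hfg, zero_comp]
  have := hS.mono_of_isConflation hfg
  have : Mono (h.lift f 0 hf0) := mono_of_mono_fac (h.lift_fst _ _ _)
  refine ⟨h.lift f 0 hf0, h.lift_fst _ _ _,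
    hS.isConflation_of_exists_lift hconf (h.lift_snd _ _ _) fun t ht => ?_⟩
  obtain ⟨ρ, hρ⟩ := hS.exists_lift hfg (t ≫ w) (by rw [Category.assoc, h.w, reassoc_of% ht,
    zero_comp])
  exact ⟨ρ, h.hom_ext (by simpa using hρ) (by simpa using ht.symm)⟩

lemma isConflation_of_isPushout {N A U B Z : C} {n : N ⟶ A} {q : A ⟶ Z} {ζ : N ⟶ U}
    {f : A ⟶ B} {k : U ⟶ B} {g : B ⟶ Z} (hnq : S.IsConflation n q) (h : IsPushout n ζ f k)
    (hfg : f ≫ g = q) (hkg : k ≫ g = 0) : S.IsConflation k g := by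
  obtain ⟨Z₀, g₀, hconf⟩ := hS.isInflation_of_isPushout h ⟨Z, q, hnq⟩
  have := hS.epi_of_isConflation hnq
  have : Epi g := epi_of_epi_fac hfg
  refine hS.isConflation_of_exists_desc hconf hkg fun t ht => ?_
  obtain ⟨σ, hσ⟩ := hS.exists_desc hnq (f ≫ t) (by rw [reassoc_of% h.w, ht, comp_zero])
  exact ⟨σ, h.hom_ext (by rw [reassoc_of% hfg, hσ]) (by rw [reassoc_of% hkg, zero_comp, ht])⟩

lemma isPushout_of_isConflation_comp {L K T X Q : C} {l : L ⟶ K} {e : K ⟶ X} {i : K ⟶ T}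
    {π : T ⟶ Q} {x : X ⟶ Q} (hle : S.IsConflation l e) (hπ : S.IsConflation (l ≫ i) π)
    (w : i ≫ π = e ≫ x) : IsPushout i e π x := by
  have := hS.epi_of_isConflation hle
  have := hS.epi_of_isConflation hπ
  refine isPushout_of_exists_desc w (fun {W} α β hαβ => ?_) fun τ τ' h _ => by rwa [cancel_epi] at h
  obtain ⟨τ, hτ⟩ := hS.exists_desc hπ α <| by
    rw [Category.assoc, hαβ, reassoc_of% hS.comp_eq_zero hle, zero_comp]
  exact ⟨τ, hτ, by rw [← cancel_epi e, ← reassoc_of% w, hτ, hαβ]⟩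

section Biproducts

variable [HasBinaryBiproducts C]

lemma isPushout_of_isConflation_biprod {N A U B : C} {a : N ⟶ A}
    {b : N ⟶ U} {f : A ⟶ B} {k : U ⟶ B}
    (h : S.IsConflation (biprod.lift a b) (biprod.desc f k)) : IsPushout a (-b) f k := by
  have w := hS.comp_eq_zero h
  simp only [biprod.lift_desc] at w
  have := hS.epi_of_isConflation h
  refine isPushout_of_exists_desc (by rw [Preadditive.neg_comp, eq_neg_iff_add_eq_zero, w])
    (fun {W} α β hαβ => ?_) fun τ τ' h₁ h₂ => ?_
  · obtain ⟨τ, hτ⟩ := hS.exists_desc h (biprod.desc α β) <| by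
      rw [biprod.lift_desc, hαβ, Preadditive.neg_comp, neg_add_cancel]
    exact ⟨τ, by simpa using biprod.inl ≫= hτ, by simpa using biprod.inr ≫= hτ⟩
  · rw [← cancel_epi (biprod.desc f k)]
    ext <;> simpa

lemma isIso_biprod_desc_of_comp_eq_id {X Y Z : C} {f : X ⟶ Y} {g : Y ⟶ Z}
    (h : S.IsConflation f g) {s : Z ⟶ Y} (hs : s ≫ g = 𝟙 Z) : IsIso (biprod.desc f s) := by
  obtain ⟨ρ, hρ⟩ := hS.exists_lift h (𝟙 Y - g ≫ s) (by simp [hs])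
  have := hS.mono_of_isConflation h
  have hfρ : f ≫ ρ = 𝟙 X := by
    rw [← cancel_mono f, Category.assoc, hρ]; simp [reassoc_of% hS.comp_eq_zero h]
  have hsρ : s ≫ ρ = 0 := by
    rw [← cancel_mono f, Category.assoc, hρ]; simp [reassoc_of% hs]
  exact ⟨biprod.lift ρ g, by ext <;> simp [hfρ, hsρ, hs, hS.comp_eq_zero h],
    by simp [hρ]⟩

/-- The pullback of `f ≫ g` along `g` is `A ⊞ U` by weak idempotent completeness, and then
`U → B` is a pushout of the kernel `N ↣ A` of `f ≫ g`, with cokernel `g`. -/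
lemma isDeflation_of_comp (hWIC : WeaklyIdempotentComplete C) {A B Z : C} {f : A ⟶ B}
    {g : B ⟶ Z} (h : S.IsDeflation (f ≫ g)) : S.IsDeflation g := by
  obtain ⟨N, n, hn⟩ := h
  obtain ⟨D, p, g', pb, -⟩ := hS.pullback_deflation (f ≫ g) g ⟨N, n, hn⟩
  obtain ⟨x, hxp, hx⟩ := hS.isConflation_of_isPullback hn pb
  obtain ⟨U, e, hue, hep⟩ := hWIC.exists_iso_biprod (pb.lift_fst (𝟙 A) f (by simp))
  have hinl : biprod.inl ≫ e.inv ≫ g' = f := by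
    rw [← reassoc_of% hue, e.hom_inv_id_assoc, pb.lift_snd]
  have hconf := hS.isConflation_iso hx (Iso.refl _) e (Iso.refl _)
    (f' := biprod.lift n (x ≫ e.hom ≫ biprod.snd)) (g' := biprod.desc f (biprod.inr ≫ e.inv ≫ g'))
    (by ext <;> simp [hep, hxp]) (by ext <;> simp [hinl])
  refine ⟨_, _, hS.isConflation_of_isPushout hn (hS.isPushout_of_isConflation_biprod hconf)
    rfl ?_⟩
  rw [Category.assoc, Category.assoc, ← pb.w, ← hep]
  simp

variable [HasZeroObject C]

lemma isDeflation_biprod_fst (X Y : C) : S.IsDeflation (biprod.fst : X ⊞ Y ⟶ X) :=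
  hS.isDeflation_of_isPullback (IsPullback.of_has_biproduct X Y).flip (hS.isDeflation_zero Y)

lemma isDeflation_biprod_map {A A' : C} {f : A ⟶ A'} (hf : S.IsDeflation f) (K : C) :
    S.IsDeflation (biprod.map f (𝟙 K)) := by
  have h : IsPullback (biprod.map f (𝟙 K)) biprod.fst biprod.fst f :=
    IsPullback.of_right (by simpa using (IsPullback.of_has_biproduct A K).flip) (by simp)
      (IsPullback.of_has_biproduct A' K).flip
  exact hS.isDeflation_of_isPullback h.flip hf

lemma isDeflation_biprod_desc {B X Y : C} {g : B ⟶ X} (hg : S.IsDeflation g) (δ : Y ⟶ X) :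
    S.IsDeflation (biprod.desc g δ) := by
  have : IsIso (biprod.lift (biprod.desc (𝟙 X) δ) biprod.snd) :=
    ⟨biprod.lift (biprod.fst - biprod.snd ≫ δ) biprod.snd, by ext <;> simp, by ext <;> simp⟩
  have hfac : biprod.desc g δ = biprod.map g (𝟙 Y) ≫
      biprod.lift (biprod.desc (𝟙 X) δ) biprod.snd ≫ biprod.fst := by
    ext <;> simp
  rw [hfac]
  exact hS.deflation_comp (hS.isDeflation_biprod_map hg Y)
    (hS.deflation_comp (hS.isDeflation_of_isIso _) (hS.isDeflation_biprod_fst X Y))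

lemma isConflation_biprod_lift_desc {A B₁ B₂ Z₁ Z₂ : C} {f₁ : A ⟶ B₁} {g₁ : B₁ ⟶ Z₁}
    {f₂ : A ⟶ B₂} {g₂ : B₂ ⟶ Z₂} (h₁ : S.IsConflation f₁ g₁) (h₂ : S.IsConflation f₂ g₂)
    {φ : B₁ ⟶ B₂} {δ : Z₁ ⟶ Z₂} (hφ : f₁ ≫ φ = f₂) (hδ : φ ≫ g₂ = g₁ ≫ δ) :
    S.IsConflation (biprod.lift φ (-g₁)) (biprod.desc g₂ δ) := by
  obtain ⟨K, k, hk⟩ := hS.isDeflation_biprod_desc ⟨_, _, h₂⟩ δ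
  have := hS.mono_of_isConflation h₂
  have : Mono (biprod.lift φ (-g₁)) := by
    refine Preadditive.mono_of_cancel_zero _ fun {E} ρ hρ => ?_
    obtain ⟨σ, rfl⟩ := hS.exists_lift h₁ ρ (by simpa using hρ =≫ biprod.snd)
    have hσ : σ ≫ f₂ = 0 := by simpa [hφ] using hρ =≫ biprod.fst
    rw [(cancel_mono f₂).1 (hσ.trans zero_comp.symm), zero_comp]
  refine hS.isConflation_of_exists_lift hk (by simp [hδ]) fun t ht => ?_
  -- `t ≫ snd` lifts along `g₁` only after pulling back along a deflation `β`; the lift of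
  -- `β ≫ t` so obtained descends along `β`.
  obtain ⟨W, θ, β, pb, hβ⟩ := hS.pullback_deflation g₁ (t ≫ biprod.snd) ⟨_, _, h₁⟩
  obtain ⟨χ, hχ⟩ := hS.exists_lift h₂ (β ≫ t ≫ biprod.fst + θ ≫ φ) <| by
    have : t ≫ biprod.fst ≫ g₂ + t ≫ biprod.snd ≫ δ = 0 := by
      simpa [biprod.desc_eq] using ht
    simp only [Preadditive.add_comp, Category.assoc, hδ, reassoc_of% pb.w]
    rw [← Preadditive.comp_add, this, comp_zero]
  refine hS.exists_comp_eq_of_isDeflation hβ (ρ' := χ ≫ f₁ - θ) ?_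
  ext
  · simp only [Category.assoc, biprod.lift_fst, Preadditive.sub_comp, hφ, hχ]
    abel
  · simp [pb.w, hS.comp_eq_zero h₁]

end Biproducts

end ConflationStruct.IsExactStructure

end TauTilting

namespace TauTilting.ConflationStruct

variable {C : Type u} [Category.{v} C] [Preadditive C] [HasZeroObject C] [HasBinaryBiproducts C]
  {S : ConflationStruct C} {T : Set C}

lemma IsTauRigid.mem_fac_of_isConflation (hT : S.IsTauRigid T) (hS : S.IsExactStructure)
    {X Y Z : C} {f : X ⟶ Y} {g : Y ⟶ Z} (hfg : S.IsConflation f g) (hX : X ∈ S.Fac T)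
    (hZ : Z ∈ S.Fac T) : Y ∈ S.Fac T := by
  obtain ⟨TX, tx, hTX, htx⟩ := hX
  obtain ⟨TZ, tz, hTZ, htz⟩ := hZ
  obtain ⟨W, w, g', pb, -⟩ := hS.pullback_deflation g tz ⟨_, _, hfg⟩
  obtain ⟨x, -, hx⟩ := hS.isConflation_of_isPullback hfg pb
  obtain ⟨s, hs⟩ := hT.2 TZ hTZ X ⟨TX, tx, hTX, htx⟩ W x g' hx
  have := hS.isIso_biprod_desc_of_comp_eq_id hx hs
  refine ⟨TX ⊞ TZ, biprod.map tx (𝟙 TZ) ≫ biprod.desc x s ≫ w, hT.1.biprod_mem hTX hTZ, ?_⟩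
  exact hS.deflation_comp (hS.isDeflation_biprod_map htx TZ) <|
    hS.deflation_comp (hS.isDeflation_of_isIso _) (hS.isDeflation_of_isPullback pb.flip htz)

lemma IsTauRigid.isProjRel_fac (hT : S.IsTauRigid T) (hS : S.IsExactStructure) {T' : C}
    (hT' : T' ∈ T) : S.IsProjRel (S.Fac T) T' := by
  refine ⟨⟨T', 𝟙 T', hT', hS.id_deflation T'⟩, fun Y Z g _ _ ⟨X, f, hX, hfg⟩ u => ?_⟩
  obtain ⟨W, w, g', pb, -⟩ := hS.pullback_deflation g u ⟨_, _, hfg⟩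
  obtain ⟨x, -, hx⟩ := hS.isConflation_of_isPullback hfg pb
  obtain ⟨s, hs⟩ := hT.2 T' hT' X hX W x g' hx
  exact ⟨s ≫ w, by rw [Category.assoc, pb.w, reassoc_of% hs]⟩

lemma IsSupportTauTilting.exists_isConflation_of_mem_fac (hT : S.IsSupportTauTilting T)
    (hS : S.IsExactStructure) (hP : S.HasEnoughProjectives) (hWIC : WeaklyIdempotentComplete C)
    {X : C} (hX : X ∈ S.Fac T) :
    ∃ (Y Z : C) (i : Y ⟶ Z) (p : Z ⟶ X), Y ∈ S.Fac T ∧ Z ∈ T ∧ S.IsConflation i p := by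
  obtain ⟨TX, a, hTX, X₁, j, hja⟩ := hX
  obtain ⟨P, b, hPproj, hb⟩ := hP X₁
  obtain ⟨K, T₀, T₁, d, i, g, hT₁, hd, hig, hT₀, happrox⟩ := hT.2 P hPproj
  obtain ⟨s, hs⟩ := happrox TX hTX (b ≫ j)
  rw [Category.assoc] at hs
  have := hS.epi_of_isDeflation hd
  obtain ⟨e, he⟩ := hS.exists_lift hja (i ≫ s) <| by
    rw [← cancel_epi d]; simp [reassoc_of% hs, hS.comp_eq_zero hja]
  have hde : d ≫ e = b := by
    have := hS.mono_of_isConflation hja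
    rw [← cancel_mono j, Category.assoc, he, hs]
  obtain ⟨L, l, hle⟩ := hS.isDeflation_of_comp hWIC (hde ▸ hb)
  obtain ⟨Q, π, hπ⟩ := hS.inflation_comp ⟨_, _, hle⟩ ⟨_, _, hig⟩
  obtain ⟨x, hx⟩ := hS.exists_desc hle (i ≫ π) (by rw [← Category.assoc, hS.comp_eq_zero hπ])
  have hpush := hS.isPushout_of_isConflation_comp hle hπ hx.symm
  have hxy : S.IsConflation x (hpush.desc g 0 (by simp [hS.comp_eq_zero hig])) :=
    hS.isConflation_of_isPushout hig hpush (hpush.inl_desc _ _ _) (hpush.inr_desc _ _ _)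
  obtain ⟨δ, hδ⟩ := hS.exists_desc hxy (hpush.desc s j he.symm ≫ a) <| by
    rw [hpush.inr_desc_assoc, hS.comp_eq_zero hja]
  exact ⟨Q, TX ⊞ T₁, _, _, ⟨T₀, π, hT₀, _, _, hπ⟩, hT.1.1.biprod_mem hTX hT₁,
    hS.isConflation_biprod_lift_desc hxy hja (hpush.inr_desc _ _ _) hδ.symm⟩

end TauTilting.ConflationStruct

namespace TauTilting

/-- for a support τ-tilting subcategory `T` of a weakly idempotent
complete exact category, `Fac T` is closed under extensions and the exact category
`Fac T` has enough projectives given by `T`. -/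
theorem fac_has_enough_projectives
    {C : Type u} [Category.{v} C] [Preadditive C] [HasZeroObject C] [HasBinaryBiproducts C]
    (S : ConflationStruct C) (hS : S.IsExactStructure) (hP : S.HasEnoughProjectives)
    (hWIC : WeaklyIdempotentComplete C)
    (T : Set C) (hT : S.IsSupportTauTilting T) :
    (∀ {X Y Z : C} {f : X ⟶ Y} {g : Y ⟶ Z}, S.IsConflation f g →
        X ∈ S.Fac T → Z ∈ S.Fac T → Y ∈ S.Fac T) ∧
    (∀ T' ∈ T, S.IsProjRel (S.Fac T) T') ∧
    (∀ X ∈ S.Fac T, ∃ (Y Z : C) (i : Y ⟶ Z) (p : Z ⟶ X),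
        Y ∈ S.Fac T ∧ Z ∈ T ∧ S.IsConflation i p) :=
  ⟨hT.1.mem_fac_of_isConflation hS, fun _ => hT.1.isProjRel_fac hS,
    fun _ => hT.exists_isConflation_of_mem_fac hS hP hWIC⟩

end TauTilting
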